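/- Let Γ be a real symmetric positive semidefinite matrix of size 2N_p × 2N_p, Φ a real N_p × 2N_p matrix, and let λ, μ ∈ ℝ satisfy λ + μ > 0, μ > 0, and λ - μ < 0. Suppose there exists C > 0 with VᵀΓV ≥ C|V|² for all V in a subspace E, and VᵀΓV ≥ 2|ΦV|² for all V ∈ E. Then for all V ∈ E, Vᵀ((λ-μ)ΦᵀΦ + μΓ)V = 0 implies V = 0; in particular the restriction of (λ-μ)ΦᵀΦ + μΓ to E is injective. -/
import Mathlib


open Matrix

theorem lps_case2_injective
    {Np : ℕ} (Γ : Matrix (Fin (2 * Np)) (Fin (2 * Np)) ℝ)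
    (Φ : Matrix (Fin Np) (Fin (2 * Np)) ℝ)
    (hsym : Γ.IsSymm) (hpsd : Γ.PosSemidef)
    (lam mu : ℝ) (hlm : lam + mu > 0) (hmu : mu > 0) (hlmμ : lam - mu < 0)
    (E : Submodule ℝ (Fin (2 * Np) → ℝ))
    (C : ℝ) (hC : 0 < C)
    (hcoerc : ∀ V ∈ E, V ⬝ᵥ (Γ *ᵥ V) ≥ C * (V ⬝ᵥ V))
    (hCS : ∀ V ∈ E, V ⬝ᵥ (Γ *ᵥ V) ≥ 2 * ((Φ *ᵥ V) ⬝ᵥ (Φ *ᵥ V))) :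
    (∀ V ∈ E, V ⬝ᵥ (((lam - mu) • (Φᵀ * Φ) + mu • Γ) *ᵥ V) = 0 → V = 0) ∧
    (∀ V ∈ E, ∀ W ∈ E,
      ((lam - mu) • (Φᵀ * Φ) + mu • Γ) *ᵥ V = ((lam - mu) • (Φᵀ * Φ) + mu • Γ) *ᵥ W
      → V = W) := by
  have key : ∀ V ∈ E, V ⬝ᵥ (((lam - mu) • (Φᵀ * Φ) + mu • Γ) *ᵥ V) = 0 → V = 0 := by
    intro V hV hQ
    have hexpand : V ⬝ᵥ (((lam - mu) • (Φᵀ * Φ) + mu • Γ) *ᵥ V)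
        = (lam - mu) * ((Φ *ᵥ V) ⬝ᵥ (Φ *ᵥ V)) + mu * (V ⬝ᵥ (Γ *ᵥ V)) := by
      rw [Matrix.add_mulVec, dotProduct_add, Matrix.smul_mulVec,
        Matrix.smul_mulVec, dotProduct_smul, dotProduct_smul]
      simp only [smul_eq_mul]
      congr 1
      rw [← Matrix.mulVec_mulVec, Matrix.dotProduct_mulVec, Matrix.vecMul_transpose]
    have h1 : V ⬝ᵥ (Γ *ᵥ V) ≥ 2 * ((Φ *ᵥ V) ⬝ᵥ (Φ *ᵥ V)) := hCS V hV
    have h2 : V ⬝ᵥ (Γ *ᵥ V) ≥ C * (V ⬝ᵥ V) := hcoerc V hV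
    have hge : (lam - mu) * ((Φ *ᵥ V) ⬝ᵥ (Φ *ᵥ V)) + mu * (V ⬝ᵥ (Γ *ᵥ V))
        ≥ ((lam + mu) / 2) * (V ⬝ᵥ (Γ *ᵥ V)) := by
      nlinarith [mul_nonneg (by linarith : (0:ℝ) ≤ mu - lam)
        (by linarith : (0:ℝ) ≤ V ⬝ᵥ (Γ *ᵥ V) - 2 * ((Φ *ᵥ V) ⬝ᵥ (Φ *ᵥ V)))]
    have hVV : 0 ≤ V ⬝ᵥ V := by
      simp only [dotProduct]
      exact Finset.sum_nonneg fun i _ => mul_self_nonneg _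
    have hfinal : 0 ≥ ((lam + mu) / 2) * (C * (V ⬝ᵥ V)) := by
      have hΓ : V ⬝ᵥ (Γ *ᵥ V) ≥ C * (V ⬝ᵥ V) := h2
      have := hge
      nlinarith [hQ, hexpand]
    have : V ⬝ᵥ V ≤ 0 := by nlinarith [mul_pos (half_pos hlm) hC]
    have hzero : V ⬝ᵥ V = 0 := le_antisymm this hVV
    funext i
    have := dotProduct_self_eq_zero.mp hzero
    simpa using congrFun this i
  refine ⟨key, ?_⟩
  intro V hV W hW hMW
  have hVW : V - W ∈ E := E.sub_mem hV hW
  have hM : ((lam - mu) • (Φᵀ * Φ) + mu • Γ) *ᵥ (V - W) = 0 := by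
    rw [Matrix.mulVec_sub, hMW, sub_self]
  have := key (V - W) hVW (by rw [hM, dotProduct_zero])
  exact sub_eq_zero.mp this
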